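/- arXiv:2602.01998 — 5 statements merged into one kernel-verified Lean document; each statement's English description precedes it below -/
import Mathlib

section
/- Let X be a uniformly locally finite metric space, and let (A_n)_{n∈ℕ} be a sequence of nonempty finite, pairwise disjoint subsets of X with d(A_n, A_m) ≥ 2(n+m) for all n ≠ m. For M ⊆ ℕ define g_M : X → ℝ by g_M(x) = Σ_{n∈M} max{0, 1 − d(x,A_n)/n}. Then g_M is a slowly oscillating function: for every ε > 0 and r > 0 there exists a finite set F ⊆ X such that for all x, x' ∉ F with d(x,x') ≤ r one has |g_M(x) − g_M(x')| < ε. -/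
theorem stmt6 {X : Type*} [MetricSpace X]
    (hfin : ∀ (x : X) (s : ℝ), ({y : X | dist x y ≤ s}).Finite)
    (A : ℕ → Set X) (hne : ∀ n, (A n).Nonempty) (hAfin : ∀ n, (A n).Finite)
    (hdisj : ∀ n m, n ≠ m → Disjoint (A n) (A m))
    (hsep : ∀ n m : ℕ, n ≠ m → ∀ a ∈ A n, ∀ b ∈ A m, 2 * ((n : ℝ) + (m : ℝ)) ≤ dist a b)
    (M : Set ℕ) (hM : 0 ∉ M)
    (gM : X → ℝ)
    (hgM : ∀ x, gM x = ∑' n : M, max 0 (1 - Metric.infDist x (A n) / ((n : ℕ) : ℝ))) :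
    ∀ ε : ℝ, 0 < ε → ∀ r : ℝ, 0 < r → ∃ F : Finset X,
      ∀ x x' : X, x ∉ F → x' ∉ F → dist x x' ≤ r → |gM x - gM x'| < ε := by
  intro ε hε r hr
  classical
  set f : ℕ → X → ℝ := fun n x => max 0 (1 - Metric.infDist x (A n) / n) with hf
  have hfnonneg : ∀ n x, 0 ≤ f n x := fun n x => le_max_left _ _
  have hpos : ∀ (n : ℕ), 0 < n → ∀ x : X, 0 < f n x → Metric.infDist x (A n) < n := by
    intro n hn x h
    have hn' : (0:ℝ) < n := by exact_mod_cast hn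
    rcases lt_max_iff.mp h with h' | h'
    · exact absurd h' (lt_irrefl 0)
    · have : Metric.infDist x (A n) / n < 1 := by linarith
      exact (div_lt_one hn').mp this
  have hzero : ∀ n x, ¬ (0 < f n x) → f n x = 0 := by
    intro n x h
    exact le_antisymm (not_lt.mp h) (hfnonneg n x)
  -- disjoint supports
  have h1 : ∀ (x : X) (n m : ℕ), n ∈ M → m ∈ M → n ≠ m → 0 < f n x → f m x = 0 := by
    intro x n m hnM hmM hnm hfx
    have hn : 0 < n := Nat.pos_of_ne_zero (fun h => hM (h ▸ hnM))
    have hm : 0 < m := Nat.pos_of_ne_zero (fun h => hM (h ▸ hmM))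
    have hm' : (0:ℝ) < m := by exact_mod_cast hm
    have hdx : Metric.infDist x (A n) < n := hpos n hn x hfx
    obtain ⟨a, haA, hax⟩ := (Metric.infDist_lt_iff (hne n)).mp hdx
    have hge : (m:ℝ) ≤ Metric.infDist x (A m) := by
      by_contra hc
      push_neg at hc
      obtain ⟨b, hb, hxb⟩ := (Metric.infDist_lt_iff (hne m)).mp hc
      have hab := hsep n m hnm a haA b hb
      have htri : dist a b ≤ dist a x + dist x b := dist_triangle a x b
      have hxa : dist a x < n := by rwa [dist_comm]
      have hn0 : (0:ℝ) ≤ n := Nat.cast_nonneg n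
      have hm0 : (0:ℝ) ≤ m := Nat.cast_nonneg m
      linarith
    have hge1 : (1:ℝ) ≤ Metric.infDist x (A m) / m := (one_le_div hm').mpr hge
    have : 1 - Metric.infDist x (A m) / m ≤ 0 := by linarith
    simp only [hf]
    exact max_eq_left this
  -- Lipschitz-type bound
  have hlip : ∀ (n : ℕ), 0 < n → ∀ x x' : X, f n x - f n x' ≤ dist x x' / n := by
    intro n hn x x'
    have hn' : (0:ℝ) < n := by exact_mod_cast hn
    have hd : Metric.infDist x' (A n) ≤ Metric.infDist x (A n) + dist x x' := by
      have := Metric.infDist_le_infDist_add_dist (x := x') (y := x) (s := A n)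
      rwa [dist_comm x' x] at this
    have key : (1 - Metric.infDist x (A n) / n) - (1 - Metric.infDist x' (A n) / n)
        ≤ dist x x' / n := by
      have heq : (1 - Metric.infDist x (A n) / n) - (1 - Metric.infDist x' (A n) / n)
          = (Metric.infDist x' (A n) - Metric.infDist x (A n)) / n := by ring
      rw [heq]
      gcongr
      linarith
    calc f n x - f n x'
        ≤ max (0 - 0) ((1 - Metric.infDist x (A n) / n) - (1 - Metric.infDist x' (A n) / n)) :=
          max_sub_max_le_max _ _ _ _
      _ ≤ dist x x' / n := by
          apply max_le
          · simpa using div_nonneg dist_nonneg hn'.le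
          · exact key
  -- the finite exceptional set
  set N : ℕ := ⌈r / ε⌉₊ with hN
  set S : Set X := ⋃ n ∈ Finset.range (N + 1), {y : X | Metric.infDist y (A n) < n} with hS
  have hSfin : S.Finite := by
    apply Set.Finite.biUnion (Finset.range (N + 1)).finite_toSet
    intro n _
    apply Set.Finite.subset (Set.Finite.biUnion (hAfin n) (fun a _ => hfin a n))
    intro y hy
    simp only [Set.mem_setOf_eq] at hy
    have hyn : (0:ℝ) < n := lt_of_le_of_lt Metric.infDist_nonneg hy
    obtain ⟨a, haA, hya⟩ := (Metric.infDist_lt_iff (hne n)).mp hy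
    exact Set.mem_biUnion haA (by simp [Set.mem_setOf_eq, dist_comm]; exact le_of_lt hya)
  refine ⟨hSfin.toFinset, ?_⟩
  have hnotS : ∀ x : X, x ∉ hSfin.toFinset → ∀ n : ℕ, n ∈ M → 0 < f n x → N < n := by
    intro x hx n hnM hfx
    have hn : 0 < n := Nat.pos_of_ne_zero (fun h => hM (h ▸ hnM))
    by_contra hc
    push_neg at hc
    apply hx
    rw [Set.Finite.mem_toFinset]
    exact Set.mem_biUnion (Finset.mem_range.mpr (Nat.lt_succ_of_le hc)) (hpos n hn x hfx)
  -- key one-sided estimate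
  have key : ∀ x x' : X, x ∉ hSfin.toFinset → x' ∉ hSfin.toFinset → dist x x' ≤ r →
      gM x - gM x' < ε := by
    intro x x' hx hx' hd
    rw [hgM x, hgM x']
    have hterm : ∀ (z : X) (n : M), max 0 (1 - Metric.infDist z (A n) / ((n : ℕ) : ℝ)) = f n z :=
      fun z n => rfl
    by_cases hex : ∃ n : M, 0 < f (n : ℕ) x
    · obtain ⟨n, hn⟩ := hex
      have hnM : (n : ℕ) ∈ M := n.2
      have hnpos : 0 < (n : ℕ) := Nat.pos_of_ne_zero (fun h => hM (h ▸ hnM))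
      have hn' : (0:ℝ) < ((n : ℕ) : ℝ) := by exact_mod_cast hnpos
      have hsum1 : (∑' m : M, max 0 (1 - Metric.infDist x (A m) / ((m : ℕ) : ℝ)))
          = f (n : ℕ) x :=
        tsum_eq_single n fun m hmn =>
          h1 x (n : ℕ) (m : ℕ) n.2 m.2 (fun h => hmn (Subtype.ext h.symm)) hn
      have hsum2 : f (n : ℕ) x' ≤
          ∑' m : M, max 0 (1 - Metric.infDist x' (A m) / ((m : ℕ) : ℝ)) := by
        by_cases h' : 0 < f (n : ℕ) x'
        · have : (∑' m : M, max 0 (1 - Metric.infDist x' (A m) / ((m : ℕ) : ℝ)))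
              = f (n : ℕ) x' :=
            tsum_eq_single n fun m hmn =>
              h1 x' (n : ℕ) (m : ℕ) n.2 m.2 (fun h => hmn (Subtype.ext h.symm)) h'
          exact this.ge
        · rw [hzero _ _ h']
          exact tsum_nonneg fun m => hfnonneg (m : ℕ) x'
      have hNn : N < (n : ℕ) := hnotS x hx (n : ℕ) n.2 hn
      have hre : r / ε < ((n : ℕ) : ℝ) :=
        lt_of_le_of_lt (Nat.le_ceil _) (by exact_mod_cast hNn)
      calc (∑' m : M, max 0 (1 - Metric.infDist x (A m) / ((m : ℕ) : ℝ)))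
            - ∑' m : M, max 0 (1 - Metric.infDist x' (A m) / ((m : ℕ) : ℝ))
          ≤ f (n : ℕ) x - f (n : ℕ) x' := by rw [hsum1]; linarith
        _ ≤ dist x x' / ((n : ℕ) : ℝ) := hlip (n : ℕ) hnpos x x'
        _ ≤ r / ((n : ℕ) : ℝ) := by gcongr
        _ < ε := by
            rw [div_lt_iff₀ hn']
            have := (div_lt_iff₀ hε).mp hre
            nlinarith
    · have hx0 : (∑' m : M, max 0 (1 - Metric.infDist x (A m) / ((m : ℕ) : ℝ))) = 0 := by
        have h0 : ∀ m : M, max 0 (1 - Metric.infDist x (A m) / ((m : ℕ) : ℝ)) = 0 :=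
          fun m => hzero (m : ℕ) x (fun h => hex ⟨m, h⟩)
        rw [tsum_congr h0, tsum_zero]
      have hx'0 : 0 ≤ ∑' m : M, max 0 (1 - Metric.infDist x' (A m) / ((m : ℕ) : ℝ)) :=
        tsum_nonneg fun m => hfnonneg (m : ℕ) x'
      rw [hx0]
      linarith
  intro x x' hx hx' hd
  rw [abs_sub_lt_iff]
  exact ⟨key x x' hx hx' hd, key x' x hx' hx (by rwa [dist_comm])⟩
end

section
/- Let X and Y be metric spaces and suppose f : X → Y and g : Y → X are injective maps that are coarse equivalences and mutual coarse inverses (g∘f is close to id_X and f∘g is close to id_Y). Then there exists a bijection h : X → Y such that for every x ∈ X, either h(x) = f(x), or x ∈ Im(g) and h(x) = g⁻¹(x); consequently h is close to f and h is a bijective coarse equivalence. -/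
def Coarse {X Y : Type*} [MetricSpace X] [MetricSpace Y] (f : X → Y) : Prop :=
  ∀ r : ℝ, 0 < r → ∃ s : ℝ, 0 < s ∧ ∀ x x' : X, dist x x' ≤ r → dist (f x) (f x') ≤ s

def Close {X Y : Type*} [MetricSpace X] [MetricSpace Y] (f g : X → Y) : Prop :=
  ∃ C : ℝ, ∀ x : X, dist (f x) (g x) ≤ C

open Set Function

lemma sb_dichotomy {α β : Type*} (f : α → β) (g : β → α)
    (hf : Function.Injective f) (hg : Function.Injective g) :
    ∃ h : α → β, Function.Bijective h ∧
      ∀ x, h x = f x ∨ ∃ y, g y = x ∧ h x = y := by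
  classical
  cases' isEmpty_or_nonempty β with hβ hβ
  · have : IsEmpty α := Function.isEmpty f
    exact ⟨f, ⟨hf, fun y => (hβ.false y).elim⟩, fun x => Or.inl rfl⟩
  set F : Set α →o Set α :=
    { toFun := fun s => (g '' (f '' s)ᶜ)ᶜ
      monotone' := fun s t hst =>
        compl_subset_compl.mpr <| image_mono <| compl_subset_compl.mpr <| image_mono hst }
  set s : Set α := F.lfp
  have hs : (g '' (f '' s)ᶜ)ᶜ = s := F.map_lfp
  have hns : g '' (f '' s)ᶜ = sᶜ := compl_injective (by simp [hs])
  set g' := invFun g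
  have g'g : LeftInverse g' g := leftInverse_invFun hg
  have hg'ns : g' '' sᶜ = (f '' s)ᶜ := by rw [← hns, g'g.image_image]
  set h : α → β := s.piecewise f g'
  have hsurj : Surjective h := by rw [← range_eq_univ, range_piecewise, hg'ns, union_compl_self]
  have hinj : Injective h := by
    refine (injective_piecewise_iff _).2 ⟨hf.injOn, ?_, ?_⟩
    · intro x hx y hy hxy
      obtain ⟨x', _, rfl⟩ : x ∈ g '' (f '' s)ᶜ := by rwa [hns]
      obtain ⟨y', _, rfl⟩ : y ∈ g '' (f '' s)ᶜ := by rwa [hns]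
      rw [g'g _, g'g _] at hxy
      rw [hxy]
    · intro x hx y hy hxy
      obtain ⟨y', hy', rfl⟩ : y ∈ g '' (f '' s)ᶜ := by rwa [hns]
      rw [g'g _] at hxy
      exact hy' ⟨x, hx, hxy⟩
  refine ⟨h, ⟨hinj, hsurj⟩, fun x => ?_⟩
  by_cases hx : x ∈ s
  · exact Or.inl (Set.piecewise_eq_of_mem _ _ _ hx)
  · obtain ⟨y', _, rfl⟩ : x ∈ g '' (f '' s)ᶜ := by rwa [hns]
    exact Or.inr ⟨y', rfl, by show s.piecewise f g' (g y') = y'; rw [Set.piecewise_eq_of_notMem _ _ _ hx, g'g]⟩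

theorem stmt10 {X Y : Type*} [MetricSpace X] [MetricSpace Y]
    (f : X → Y) (g : Y → X)
    (hfi : Function.Injective f) (hgi : Function.Injective g)
    (hf : Coarse f) (hg : Coarse g)
    (hgf : Close (g ∘ f) id) (hfg : Close (f ∘ g) id) :
    ∃ h : X → Y, Function.Bijective h ∧
      (∀ x : X, h x = f x ∨ ∃ y : Y, g y = x ∧ h x = y) ∧
      Close h f ∧ Coarse h ∧ Close (g ∘ h) id ∧ Close (h ∘ g) id := by
  obtain ⟨h, hbij, hdich⟩ := sb_dichotomy f g hfi hgi
  obtain ⟨C, hC⟩ := hfg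
  obtain ⟨C', hC'⟩ := hgf
  set D : ℝ := max C 1 with hD
  have hD1 : (1:ℝ) ≤ D := le_max_right _ _
  have hDpos : 0 < D := lt_of_lt_of_le one_pos hD1
  have hclose : ∀ x, dist (h x) (f x) ≤ D := by
    intro x
    rcases hdich x with heq | ⟨y, hy, heq⟩
    · rw [heq, dist_self]; exact le_of_lt hDpos
    · rw [heq, ← hy, dist_comm]
      exact le_trans (hC y) (le_max_left _ _)
  refine ⟨h, hbij, hdich, ⟨D, hclose⟩, ?_, ?_, ?_⟩
  · -- Coarse h
    intro r hr
    obtain ⟨t, ht, hft⟩ := hf r hr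
    refine ⟨t + 2 * D, by positivity, fun x x' hxx' => ?_⟩
    calc dist (h x) (h x') ≤ dist (h x) (f x) + dist (f x) (f x') + dist (f x') (h x') :=
          dist_triangle4 _ _ _ _
      _ ≤ D + t + dist (h x') (f x') := by
          rw [dist_comm (f x')]
          exact add_le_add (add_le_add (hclose x) (hft x x' hxx')) le_rfl
      _ ≤ D + t + D := by linarith [hclose x']
      _ = t + 2 * D := by ring
  · -- Close (g ∘ h) id
    obtain ⟨t, _, hgt⟩ := hg D hDpos
    refine ⟨t + C', fun x => ?_⟩
    calc dist (g (h x)) x ≤ dist (g (h x)) (g (f x)) + dist (g (f x)) x := dist_triangle _ _ _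
      _ ≤ t + C' := add_le_add (hgt _ _ (hclose x)) (hC' x)
  · -- Close (h ∘ g) id
    refine ⟨D, fun y => ?_⟩
    rcases hdich (g y) with heq | ⟨y', hy', heq⟩
    · show dist (h (g y)) y ≤ D
      rw [heq]
      exact le_trans (hC y) (le_max_left _ _)
    · show dist (h (g y)) y ≤ D
      rw [heq, hgi hy', dist_self]
      exact le_of_lt hDpos
end

section
/- (Lemma 2.2 of the paper) Let H be a separable Hilbert space with orthonormal basis ē = (e_n), D(ē) the diagonal masa, and E the diagonal conditional expectation. Let (b_n)_{n∈ℕ} be an SOT-null sequence of compact operators such that for every M ⊆ ℕ the sum Σ_{n∈M} b_n exists (SOT) and belongs to D(ē) + K(H). Then lim_n ‖E(b_n) − b_n‖ = 0. -/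
set_option linter.unusedSectionVars false

noncomputable def rankOneProj {H : Type*} [NormedAddCommGroup H] [InnerProductSpace ℂ H]
    (e : ℕ → H) (n : ℕ) : H →L[ℂ] H :=
  (innerSL ℂ (e n)).smulRight (e n)

namespace Stmt15

variable {H : Type*} [NormedAddCommGroup H] [InnerProductSpace ℂ H] [CompleteSpace H]
variable (e : ℕ → H)

local notation "⟪" x ", " y "⟫" => @inner ℂ _ _ x y

noncomputable def Q (m : ℕ) : H →L[ℂ] H := ∑ i ∈ Finset.range m, rankOneProj e i

theorem Q_apply (m : ℕ) (ξ : H) : Q e m ξ = ∑ i ∈ Finset.range m, ⟪e i, ξ⟫ • e i := by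
  simp [Q, rankOneProj, ContinuousLinearMap.sum_apply]

variable {e} (he : Orthonormal ℂ e)
include he

theorem norm_sum_sq (s : Finset ℕ) (a : ℕ → ℂ) :
    ‖∑ i ∈ s, a i • e i‖ ^ 2 = ∑ i ∈ s, ‖a i‖ ^ 2 := by
  rw [← inner_self_eq_norm_sq (𝕜 := ℂ)]
  rw [sum_inner]
  have : ∀ i ∈ s, ⟪a i • e i, ∑ j ∈ s, a j • e j⟫ = (‖a i‖ : ℂ) ^ 2 := by
    intro i hi
    rw [inner_smul_left, he.inner_right_sum a hi, RCLike.conj_mul]; norm_cast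
  rw [Finset.sum_congr rfl this]
  simp [← Complex.ofReal_pow]

theorem inner_Q (m : ℕ) (ξ : H) (i : ℕ) :
    ⟪e i, Q e m ξ⟫ = if i < m then ⟪e i, ξ⟫ else 0 := by
  rw [Q_apply]
  by_cases h : i < m
  · rw [if_pos h]
    exact he.inner_right_sum _ (Finset.mem_range.mpr h)
  · rw [if_neg h, inner_sum, Finset.sum_eq_zero]
    intro j hj
    rw [Finset.mem_range] at hj
    have : i ≠ j := by omega
    simp [inner_smul_right, orthonormal_iff_ite.mp he, this]

theorem Q_norm_le (m : ℕ) (ξ : H) : ‖Q e m ξ‖ ≤ ‖ξ‖ := by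
  have h1 : ‖Q e m ξ‖ ^ 2 ≤ ‖ξ‖ ^ 2 := by
    rw [Q_apply, norm_sum_sq he]
    exact he.sum_inner_products_le ξ
  nlinarith [norm_nonneg (Q e m ξ), norm_nonneg ξ]


theorem Q_e {i m : ℕ} (h : i < m) : Q e m (e i) = e i := by
  rw [Q_apply, Finset.sum_eq_single i]
  · simp [orthonormal_iff_ite.mp he, he.1 i]
  · intro j _ hj; simp [orthonormal_iff_ite.mp he, hj]
  · intro hc; exact absurd (Finset.mem_range.mpr h) hc

theorem Q_Q {m M : ℕ} (h : m ≤ M) (ξ : H) : Q e m (Q e M ξ) = Q e m ξ := by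
  rw [Q_apply e m (Q e M ξ), Q_apply e m ξ]
  refine Finset.sum_congr rfl fun i hi => ?_
  rw [Finset.mem_range] at hi
  rw [inner_Q he, if_pos (lt_of_lt_of_le hi h)]

theorem Q_Q' {m M : ℕ} (h : m ≤ M) (ξ : H) : Q e M (Q e m ξ) = Q e m ξ := by
  rw [Q_apply e M (Q e m ξ)]
  have h2 : ∀ i ∈ Finset.range M, ⟪e i, Q e m ξ⟫ • e i
      = if i ∈ Finset.range m then ⟪e i, ξ⟫ • e i else 0 := by
    intro i _
    rw [inner_Q he]
    by_cases hi : i < m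
    · rw [if_pos hi, if_pos (Finset.mem_range.mpr hi)]
    · rw [if_neg hi, if_neg (fun hc => hi (Finset.mem_range.mp hc)), zero_smul]
  rw [Finset.sum_congr rfl h2, Finset.sum_ite_mem, Finset.inter_eq_right.mpr
    (Finset.range_subset_range.mpr h), ← Q_apply]

theorem Q_inner_left (m : ℕ) (ζ ξ : H) : ⟪Q e m ζ, ξ⟫ = ⟪ζ, Q e m ξ⟫ := by
  rw [Q_apply e m ζ, Q_apply e m ξ, sum_inner, inner_sum]
  refine Finset.sum_congr rfl fun i _ => ?_
  rw [inner_smul_left, inner_smul_right, ← inner_conj_symm (e i) ζ, RCLike.conj_conj]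
  ring

theorem norm_sub_Q_le (m : ℕ) (ξ : H) : ‖ξ - Q e m ξ‖ ≤ ‖ξ‖ := by
  have horth : ⟪Q e m ξ, ξ - Q e m ξ⟫ = 0 := by
    rw [inner_sub_right, Q_inner_left he m ξ ξ, Q_inner_left he m ξ (Q e m ξ),
      Q_Q he le_rfl, sub_self]
  have hpy := norm_add_sq_eq_norm_sq_add_norm_sq_of_inner_eq_zero (Q e m ξ) (ξ - Q e m ξ) horth
  rw [add_sub_cancel] at hpy
  nlinarith [norm_nonneg (Q e m ξ), norm_nonneg (ξ - Q e m ξ), norm_nonneg ξ]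

theorem one_sub_Q_apply (m : ℕ) (ξ : H) : ((1 : H →L[ℂ] H) - Q e m) ξ = ξ - Q e m ξ := by
  simp

theorem one_sub_Q_norm_le (m : ℕ) : ‖(1 : H →L[ℂ] H) - Q e m‖ ≤ 1 := by
  refine ContinuousLinearMap.opNorm_le_bound _ zero_le_one fun ξ => ?_
  rw [one_sub_Q_apply he, one_mul]
  exact norm_sub_Q_le he m ξ

theorem comp_one_sub_Q_antitone (a : H →L[ℂ] H) {m M : ℕ} (h : m ≤ M) :
    ‖a ∘L ((1 : H →L[ℂ] H) - Q e M)‖ ≤ ‖a ∘L ((1 : H →L[ℂ] H) - Q e m)‖ := by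
  have key : a ∘L ((1 : H →L[ℂ] H) - Q e M)
      = (a ∘L ((1 : H →L[ℂ] H) - Q e m)) ∘L ((1 : H →L[ℂ] H) - Q e M) := by
    ext ξ
    simp only [ContinuousLinearMap.comp_apply, one_sub_Q_apply he]
    have h0 : (Q e m) (ξ - (Q e M) ξ) = 0 := by rw [map_sub, Q_Q he h, sub_self]
    rw [h0, sub_zero, map_sub]
  calc ‖a ∘L ((1 : H →L[ℂ] H) - Q e M)‖
      ≤ ‖a ∘L ((1 : H →L[ℂ] H) - Q e m)‖ * ‖(1 : H →L[ℂ] H) - Q e M‖ := by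
        rw [key]; exact ContinuousLinearMap.opNorm_comp_le _ _
    _ ≤ ‖a ∘L ((1 : H →L[ℂ] H) - Q e m)‖ * 1 := by
        exact mul_le_mul_of_nonneg_left (one_sub_Q_norm_le he M) (norm_nonneg _)
    _ = _ := mul_one _

theorem Q_tendsto (htot : (Submodule.span ℂ (Set.range e)).topologicalClosure = ⊤) (ξ : H) :
    Filter.Tendsto (fun m => Q e m ξ) Filter.atTop (nhds ξ) := by
  let B : HilbertBasis ℕ ℂ H := HilbertBasis.mk he (le_of_eq htot.symm)
  have hr : HasSum (fun i => ⟪e i, ξ⟫ • e i) ξ := by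
    have h1 := B.hasSum_repr ξ
    have h2 : ∀ i, B.repr ξ i • (B i : H) = ⟪e i, ξ⟫ • e i := by
      intro i
      rw [B.repr_apply_apply]
      congr 1 <;> rw [show (B i : H) = e i from congrFun (HilbertBasis.coe_mk he _) i]
    simpa only [h2] using h1
  have := hr.tendsto_sum_nat
  refine this.congr fun m => ?_
  rw [Q_apply]

theorem Q_e_zero {i m : ℕ} (h : m ≤ i) : Q e m (e i) = 0 := by
  rw [Q_apply, Finset.sum_eq_zero]
  intro j hj
  rw [Finset.mem_range] at hj
  have : j ≠ i := by omega
  simp [orthonormal_iff_ite.mp he, this]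

/-- Lemma A: compact operators send "tail-supported" bounded sequences to norm-null ones. -/
theorem lemmaA (htot : (Submodule.span ℂ (Set.range e)).topologicalClosure = ⊤)
    (b : H →L[ℂ] H) (hb : IsCompactOperator ⇑b)
    (m : ℕ → ℕ) (hm : Filter.Tendsto m Filter.atTop Filter.atTop)
    (ξ : ℕ → H) (hξ : ∀ j, ‖ξ j‖ ≤ 1) :
    Filter.Tendsto (fun j => b (ξ j - Q e (m j) (ξ j))) Filter.atTop (nhds 0) := by
  set u : ℕ → H := fun j => b (ξ j - Q e (m j) (ξ j)) with hu
  refine Filter.tendsto_of_subseq_tendsto fun ns hns => ?_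
  have hK : IsCompact (closure (⇑b '' Metric.closedBall 0 1)) :=
    hb.isCompact_closure_image_closedBall 1
  have hmem : ∀ n, u (ns n) ∈ closure (⇑b '' Metric.closedBall 0 1) := by
    intro n
    refine subset_closure ⟨ξ (ns n) - Q e (m (ns n)) (ξ (ns n)), ?_, rfl⟩
    rw [Metric.mem_closedBall, dist_zero_right]
    exact (norm_sub_Q_le he _ _).trans (hξ _)
  obtain ⟨η, -, φ, hφmono, hφtend⟩ := hK.tendsto_subseq hmem
  have hadj := ContinuousLinearMap.adjoint b
  have hη : η = 0 := by
    have h1 : Filter.Tendsto (fun n => ⟪η, u (ns (φ n))⟫) Filter.atTop (nhds ⟪η, η⟫) :=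
      Filter.Tendsto.inner tendsto_const_nhds hφtend
    have h2 : Filter.Tendsto (fun n => ⟪η, u (ns (φ n))⟫) Filter.atTop (nhds 0) := by
      have heq : ∀ j, ⟪η, u j⟫
          = ⟪(ContinuousLinearMap.adjoint b) η - Q e (m j) ((ContinuousLinearMap.adjoint b) η),
              ξ j⟫ := by
        intro j
        rw [hu]
        rw [← ContinuousLinearMap.adjoint_inner_left b (ξ j - Q e (m j) (ξ j)) η]
        rw [inner_sub_right, inner_sub_left, ← Q_inner_left he]
      have hb2 : Filter.Tendsto
          (fun j => ‖(ContinuousLinearMap.adjoint b) η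
            - Q e (m j) ((ContinuousLinearMap.adjoint b) η)‖) Filter.atTop (nhds 0) := by
        have := (Q_tendsto he htot ((ContinuousLinearMap.adjoint b) η))
        have h3 : Filter.Tendsto
            (fun j => (ContinuousLinearMap.adjoint b) η
              - Q e j ((ContinuousLinearMap.adjoint b) η)) Filter.atTop (nhds 0) := by
          have := this.const_sub ((ContinuousLinearMap.adjoint b) η)
          simpa using this
        exact (tendsto_norm_zero.comp (h3.comp hm)).congr (fun j => rfl)
      refine squeeze_zero_norm (fun n => ?_) (hb2.comp ((hns.comp hφmono.tendsto_atTop)))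
      rw [heq]
      calc ‖⟪(ContinuousLinearMap.adjoint b) η
            - Q e (m (ns (φ n))) ((ContinuousLinearMap.adjoint b) η), ξ (ns (φ n))⟫‖
          ≤ ‖(ContinuousLinearMap.adjoint b) η
            - Q e (m (ns (φ n))) ((ContinuousLinearMap.adjoint b) η)‖ * ‖ξ (ns (φ n))‖ :=
            norm_inner_le_norm _ _
        _ ≤ _ * 1 := by
            exact mul_le_mul_of_nonneg_left (hξ _) (norm_nonneg _)
        _ = _ := mul_one _
    have := tendsto_nhds_unique h1 h2
    exact inner_self_eq_zero.mp this
  exact ⟨φ, by rw [← hη]; exact hφtend⟩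

/-- Step 2: compact operators have small tails in operator norm. -/
theorem compact_tail_small (htot : (Submodule.span ℂ (Set.range e)).topologicalClosure = ⊤)
    (b : H →L[ℂ] H) (hb : IsCompactOperator ⇑b) {ε : ℝ} (hε : 0 < ε) :
    ∃ m₀, ∀ m ≥ m₀, ‖b ∘L ((1 : H →L[ℂ] H) - Q e m)‖ ≤ ε := by
  suffices h : ∃ m₀, ‖b ∘L ((1 : H →L[ℂ] H) - Q e m₀)‖ ≤ ε by
    obtain ⟨m₀, hm₀⟩ := h
    exact ⟨m₀, fun m hm => (comp_one_sub_Q_antitone he b hm).trans hm₀⟩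
  by_contra hcon
  push_neg at hcon
  have hch : ∀ m : ℕ, ∃ ξ : H, ‖ξ‖ ≤ 1 ∧ ε < ‖b (ξ - Q e m ξ)‖ := by
    intro m
    have := hcon m
    have h2 : ¬ (∀ ξ : H, ‖(b ∘L ((1 : H →L[ℂ] H) - Q e m)) ξ‖ ≤ ε * ‖ξ‖) := by
      intro hc
      exact absurd (ContinuousLinearMap.opNorm_le_bound _ hε.le hc) (not_le.mpr this)
    push_neg at h2
    obtain ⟨ζ, hζ⟩ := h2
    rw [ContinuousLinearMap.comp_apply, one_sub_Q_apply he] at hζ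
    have hζ0 : ζ ≠ 0 := by
      rintro rfl
      simp at hζ
    have hpos : (0:ℝ) < ‖ζ‖ := norm_pos_iff.mpr hζ0
    refine ⟨(‖ζ‖⁻¹ : ℂ) • ζ, ?_, ?_⟩
    · rw [norm_smul]
      simp only [norm_inv, Complex.norm_real, abs_norm, norm_norm]
      rw [inv_mul_cancel₀ hpos.ne']
    · have hveq : ((‖ζ‖⁻¹ : ℂ) • ζ) - Q e m ((‖ζ‖⁻¹ : ℂ) • ζ) = (‖ζ‖⁻¹ : ℂ) • (ζ - Q e m ζ) := by
        rw [map_smul, smul_sub]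
      rw [hveq, map_smul, norm_smul]
      simp only [norm_inv, Complex.norm_real, abs_norm, norm_norm]
      have heps : ε = ‖ζ‖⁻¹ * (ε * ‖ζ‖) := by field_simp
      rw [heps]
      exact mul_lt_mul_of_pos_left hζ (inv_pos.mpr hpos)
  choose ξ hξ1 hξ2 using hch
  have := lemmaA he htot b hb id Filter.tendsto_id ξ hξ1
  have hev := this.eventually (Metric.eventually_nhds_iff.mpr
    ⟨ε, hε, fun {x} hx => (by simpa [dist_zero_right] using hx : ‖x‖ < ε)⟩)
  obtain ⟨j, hj⟩ := hev.exists
  exact absurd (hξ2 j) (not_lt.mpr (le_of_lt (by simpa using hj)))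

/-- Step 3: SOT-null implies head compressions tend to zero in norm. -/
theorem head_small (b : ℕ → H →L[ℂ] H)
    (hsot : ∀ ξ : H, Filter.Tendsto (fun n => b n ξ) Filter.atTop (nhds 0)) (m : ℕ) :
    Filter.Tendsto (fun n => ‖b n ∘L Q e m‖) Filter.atTop (nhds 0) := by
  have hb : ∀ n, ‖b n ∘L Q e m‖ ≤ ∑ i ∈ Finset.range m, ‖b n (e i)‖ := by
    intro n
    refine ContinuousLinearMap.opNorm_le_bound _ (Finset.sum_nonneg fun _ _ => norm_nonneg _)
      fun ξ => ?_
    rw [ContinuousLinearMap.comp_apply, Q_apply, map_sum, Finset.sum_mul]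
    refine (norm_sum_le _ _).trans (Finset.sum_le_sum fun i hi => ?_)
    rw [map_smul, norm_smul]
    calc ‖⟪e i, ξ⟫‖ * ‖b n (e i)‖ ≤ (‖e i‖ * ‖ξ‖) * ‖b n (e i)‖ :=
          mul_le_mul_of_nonneg_right (norm_inner_le_norm _ _) (norm_nonneg _)
      _ = ‖b n (e i)‖ * ‖ξ‖ := by rw [he.1 i]; ring
  have hsum : Filter.Tendsto (fun n => ∑ i ∈ Finset.range m, ‖b n (e i)‖)
      Filter.atTop (nhds 0) := by
    have : Filter.Tendsto (fun n => ∑ i ∈ Finset.range m, ‖b n (e i)‖)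
        Filter.atTop (nhds (∑ i ∈ Finset.range m, (0:ℝ))) :=
      tendsto_finset_sum _ fun i _ => (tendsto_norm_zero.comp (hsot (e i)))
    simpa using this
  exact squeeze_zero (fun n => norm_nonneg _) hb hsum

omit he in
theorem rankOneProj_apply (n : ℕ) (ξ : H) : rankOneProj e n ξ = ⟪e n, ξ⟫ • e n := rfl

/-- The conditional expectation on a basis vector. -/
theorem E_apply_basis (E : (H →L[ℂ] H) → (H →L[ℂ] H))
    (hE : ∀ (a : H →L[ℂ] H) (ξ : H),
      HasSum (fun n : ℕ => rankOneProj e n (a (rankOneProj e n ξ))) (E a ξ))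
    (a : H →L[ℂ] H) (i : ℕ) : E a (e i) = ⟪e i, a (e i)⟫ • e i := by
  have h1 := hE a (e i)
  have h2 : HasSum (fun n : ℕ => rankOneProj e n (a (rankOneProj e n (e i))))
      (rankOneProj e i (a (rankOneProj e i (e i)))) := by
    refine hasSum_single i fun n hn => ?_
    rw [rankOneProj_apply n (e i), orthonormal_iff_ite.mp he, if_neg hn]
    simp
  have h3 := h1.unique h2
  rw [h3, rankOneProj_apply i (e i), orthonormal_iff_ite.mp he, if_pos rfl, one_smul,
    rankOneProj_apply]

/-- Norm bound for a diagonal operator applied to a finitely supported vector. -/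
theorem diag_norm (t : H →L[ℂ] H) (c : ℕ → ℂ) (hc : ∀ i, t (e i) = c i • e i)
    {M : ℕ} {ξ : H} (hξ : Q e M ξ = ξ) {B : ℝ} (hB : 0 ≤ B)
    (hBc : ∀ i < M, ⟪e i, ξ⟫ ≠ 0 → ‖c i‖ ≤ B) : ‖t ξ‖ ≤ B * ‖ξ‖ := by
  have h1 : t ξ = ∑ i ∈ Finset.range M, (c i * ⟪e i, ξ⟫) • e i := by
    conv_lhs => rw [← hξ, Q_apply, map_sum]
    refine Finset.sum_congr rfl fun i _ => ?_
    rw [map_smul, hc i, smul_smul, mul_comm]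
  have h2 : ‖t ξ‖ ^ 2 ≤ B ^ 2 * ‖ξ‖ ^ 2 := by
    rw [h1, norm_sum_sq he]
    calc ∑ i ∈ Finset.range M, ‖c i * ⟪e i, ξ⟫‖ ^ 2
        ≤ ∑ i ∈ Finset.range M, B ^ 2 * ‖⟪e i, ξ⟫‖ ^ 2 := by
          refine Finset.sum_le_sum fun i hi => ?_
          rw [norm_mul, mul_pow]
          by_cases h0 : ⟪e i, ξ⟫ = 0
          · rw [h0]; simp
          · have := hBc i (Finset.mem_range.mp hi) h0
            have h4 : (0:ℝ) ≤ ‖⟪e i, ξ⟫‖ ^ 2 := sq_nonneg _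
            exact mul_le_mul_of_nonneg_right (pow_le_pow_left₀ (norm_nonneg _) this 2) h4
      _ = B ^ 2 * ∑ i ∈ Finset.range M, ‖⟪e i, ξ⟫‖ ^ 2 := by rw [Finset.mul_sum]
      _ ≤ B ^ 2 * ‖ξ‖ ^ 2 := by
          exact mul_le_mul_of_nonneg_left (he.sum_inner_products_le ξ) (sq_nonneg B)
  nlinarith [norm_nonneg (t ξ), norm_nonneg ξ, mul_nonneg hB (norm_nonneg ξ)]

/-- The expectation does not increase head compressions. -/
theorem E_head_le (E : (H →L[ℂ] H) → (H →L[ℂ] H))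
    (hE : ∀ (a : H →L[ℂ] H) (ξ : H),
      HasSum (fun n : ℕ => rankOneProj e n (a (rankOneProj e n ξ))) (E a ξ))
    (a : H →L[ℂ] H) (m : ℕ) : ‖E a ∘L Q e m‖ ≤ ‖a ∘L Q e m‖ := by
  refine ContinuousLinearMap.opNorm_le_bound _ (norm_nonneg _) fun ξ => ?_
  rw [ContinuousLinearMap.comp_apply]
  calc ‖E a (Q e m ξ)‖ ≤ ‖a ∘L Q e m‖ * ‖Q e m ξ‖ := by
        refine diag_norm he (E a) (fun i => ⟪e i, a (e i)⟫)
          (fun i => E_apply_basis he E hE a i) (Q_Q he le_rfl ξ) (norm_nonneg _)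
          fun i hi _ => ?_
        calc ‖⟪e i, a (e i)⟫‖ ≤ ‖e i‖ * ‖a (e i)‖ := (norm_inner_le_norm _ _).trans_eq rfl
          _ = ‖(a ∘L Q e m) (e i)‖ := by
              rw [he.1 i, one_mul, ContinuousLinearMap.comp_apply, Q_e he hi]
          _ ≤ ‖a ∘L Q e m‖ * ‖e i‖ := ContinuousLinearMap.le_opNorm _ _
          _ = ‖a ∘L Q e m‖ := by rw [he.1 i, mul_one]
    _ ≤ ‖a ∘L Q e m‖ * ‖ξ‖ :=
        mul_le_mul_of_nonneg_left (Q_norm_le he m ξ) (norm_nonneg _)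

/-- The key step for the recursive construction. -/
theorem key_step (htot : (Submodule.span ℂ (Set.range e)).topologicalClosure = ⊤)
    (E : (H →L[ℂ] H) → (H →L[ℂ] H))
    (hE : ∀ (a : H →L[ℂ] H) (ξ : H),
      HasSum (fun n : ℕ => rankOneProj e n (a (rankOneProj e n ξ))) (E a ξ))
    (b : ℕ → H →L[ℂ] H) (hbc : ∀ n, IsCompactOperator ⇑(b n))
    (hsot : ∀ ξ : H, Filter.Tendsto (fun n => b n ξ) Filter.atTop (nhds 0))
    {δ : ℝ} (hδ : 0 < δ)
    (hfreq : ∃ᶠ n in Filter.atTop, δ ≤ ‖E (b n) - b n‖)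
    {ε' : ℝ} (hε'pos : 0 < ε') (hε'le : ε' ≤ δ / 16) (mprev Nprev : ℕ) :
    ∃ (N mnext : ℕ) (ξ : H),
      Nprev < N ∧ δ ≤ ‖E (b N) - b N‖ ∧ ‖b N ∘L Q e mprev‖ ≤ ε' ∧
      mprev < mnext ∧ ‖b N ∘L ((1 : H →L[ℂ] H) - Q e mnext)‖ ≤ ε' ∧
      ‖ξ‖ ≤ 1 ∧ Q e mprev ξ = 0 ∧ Q e mnext ξ = ξ ∧ δ / 2 ≤ ‖(E (b N) - b N) ξ‖ := by
  -- choose N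
  have hev1 : ∀ᶠ n in Filter.atTop, ‖b n ∘L Q e mprev‖ ≤ ε' := by
    exact (head_small he b hsot mprev).eventually_le_const hε'pos
  have hev2 : ∀ᶠ n in Filter.atTop, Nprev < n := Filter.eventually_gt_atTop Nprev
  obtain ⟨N, hN1, hN2, hN3⟩ := (hfreq.and_eventually (hev1.and hev2)).exists
  set c : H →L[ℂ] H := E (b N) - b N with hcdef
  have hcq : ‖c ∘L Q e mprev‖ ≤ 2 * ε' := by
    have hsplit : c ∘L Q e mprev = E (b N) ∘L Q e mprev - b N ∘L Q e mprev := by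
      rw [hcdef, ContinuousLinearMap.sub_comp]
    rw [hsplit]
    calc ‖E (b N) ∘L Q e mprev - b N ∘L Q e mprev‖
        ≤ ‖E (b N) ∘L Q e mprev‖ + ‖b N ∘L Q e mprev‖ := norm_sub_le _ _
      _ ≤ ‖b N ∘L Q e mprev‖ + ‖b N ∘L Q e mprev‖ := by
          exact add_le_add_left (E_head_le he E hE (b N) mprev) _
      _ ≤ 2 * ε' := by linarith
  -- choose a near-norming vector
  have hex : ¬ ∀ ξ : H, ‖c ξ‖ ≤ 3 * δ / 4 * ‖ξ‖ := by
    intro hc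
    have := ContinuousLinearMap.opNorm_le_bound c (by positivity) hc
    linarith [hN1]
  push_neg at hex
  obtain ⟨ζ, hζ⟩ := hex
  have hζ0 : ζ ≠ 0 := by
    rintro rfl
    simp at hζ
  have hpos : (0:ℝ) < ‖ζ‖ := norm_pos_iff.mpr hζ0
  set ζ1 : H := (‖ζ‖⁻¹ : ℂ) • ζ with hζ1def
  have hζ1norm : ‖ζ1‖ = 1 := by
    rw [hζ1def, norm_smul]
    simp only [norm_inv, Complex.norm_real, abs_norm, norm_norm]
    rw [inv_mul_cancel₀ hpos.ne']
  have hcζ1 : 3 * δ / 4 < ‖c ζ1‖ := by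
    rw [hζ1def, map_smul, norm_smul]
    simp only [norm_inv, Complex.norm_real, abs_norm, norm_norm]
    have heps : 3 * δ / 4 = ‖ζ‖⁻¹ * (3 * δ / 4 * ‖ζ‖) := by field_simp
    rw [heps]
    exact mul_lt_mul_of_pos_left hζ (inv_pos.mpr hpos)
  set ζ2 : H := ζ1 - Q e mprev ζ1 with hζ2def
  have hζ2norm : ‖ζ2‖ ≤ 1 := hζ1norm ▸ norm_sub_Q_le he mprev ζ1
  have hcζ2 : 5 * δ / 8 ≤ ‖c ζ2‖ := by
    have h1 : c ζ2 = c ζ1 - (c ∘L Q e mprev) ζ1 := by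
      rw [hζ2def, map_sub, ContinuousLinearMap.comp_apply]
    have h2 : ‖(c ∘L Q e mprev) ζ1‖ ≤ 2 * ε' := by
      calc ‖(c ∘L Q e mprev) ζ1‖ ≤ ‖c ∘L Q e mprev‖ * ‖ζ1‖ := ContinuousLinearMap.le_opNorm _ _
        _ = ‖c ∘L Q e mprev‖ := by rw [hζ1norm, mul_one]
        _ ≤ 2 * ε' := hcq
    have h3 := norm_sub_norm_le (c ζ1) ((c ∘L Q e mprev) ζ1)
    rw [← h1] at h3
    have := norm_le_norm_add_norm_sub' (c ζ1) (c ζ2)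
    linarith [hcζ1, h2, (by linarith : ‖c ζ1‖ - ‖(c ∘L Q e mprev) ζ1‖ ≤ ‖c ζ2‖)]
  -- approximate ζ2 by a finitely supported vector
  set r : ℝ := δ / (8 * (‖c‖ + 1)) with hrdef
  have hr : 0 < r := by
    rw [hrdef]
    positivity
  have htail : Filter.Tendsto (fun m => ‖Q e m ζ2 - ζ2‖) Filter.atTop (nhds 0) := by
    have h4 : Filter.Tendsto (fun m => Q e m ζ2 - ζ2) Filter.atTop (nhds 0) := by
      simpa using (Q_tendsto he htot ζ2).sub_const ζ2
    exact (tendsto_norm_zero.comp h4).congr fun m => rfl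
  obtain ⟨m', hm'1, hm'2⟩ :=
    ((htail.eventually_le_const hr).and (Filter.eventually_gt_atTop mprev)).exists
  set ξ0 : H := Q e m' ζ2 with hξ0def
  have hξ0a : Q e mprev ξ0 = 0 := by
    rw [hξ0def, Q_Q he hm'2.le, hζ2def, map_sub, Q_Q he le_rfl, sub_self]
  have hξ0norm : ‖ξ0‖ ≤ 1 := (Q_norm_le he m' ζ2).trans hζ2norm
  have hcξ0 : δ / 2 ≤ ‖c ξ0‖ := by
    have h1 : c ξ0 = c ζ2 + c (ξ0 - ζ2) := by rw [← map_add]; congr 1; abel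
    have h2 : ‖c (ξ0 - ζ2)‖ ≤ ‖c‖ * r := by
      calc ‖c (ξ0 - ζ2)‖ ≤ ‖c‖ * ‖ξ0 - ζ2‖ := ContinuousLinearMap.le_opNorm _ _
        _ ≤ ‖c‖ * r := mul_le_mul_of_nonneg_left (by simpa [hξ0def] using hm'1) (norm_nonneg _)
    have h3 : ‖c‖ * r ≤ δ / 8 := by
      rw [hrdef, mul_comm, div_mul_eq_mul_div, div_le_div_iff₀ (by positivity) (by norm_num)]
      nlinarith [norm_nonneg c, hδ]
    have h4 : ‖c ζ2‖ - ‖c (ξ0 - ζ2)‖ ≤ ‖c ξ0‖ := by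
      rw [h1]
      have h5 := norm_sub_norm_le (c ζ2) (-(c (ξ0 - ζ2)))
      rw [norm_neg, sub_neg_eq_add] at h5
      linarith
    linarith
  -- choose the tail cutoff
  obtain ⟨m₀, hm₀⟩ := compact_tail_small he htot (b N) (hbc N) hε'pos
  refine ⟨N, max (max m' m₀) (mprev + 1), ξ0, hN3, hN1, hN2, ?_, ?_, hξ0norm, hξ0a, ?_, hcξ0⟩
  · omega
  · exact hm₀ _ (le_trans (le_max_right m' m₀) (le_max_left _ _))
  · rw [hξ0def, Q_Q' he (le_trans (le_max_left m' m₀) (le_max_left _ _))]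

end Stmt15

section SumTail

variable {V : Type*} [NormedAddCommGroup V]

/-- Removing one term from a convergent sum, with norm control on the rest. -/
theorem norm_hasSum_sub_single {f : ℕ → V} {S : V} (hf : HasSum f S) (j : ℕ) {C : ℕ → ℝ}
    (hC : ∀ i, i ≠ j → ‖f i‖ ≤ C i) (hCn : ∀ i, 0 ≤ C i) (hCs : Summable C) :
    ‖S - f j‖ ≤ ∑' i, C i := by
  classical
  set g : ℕ → V := fun i => if i = j then 0 else f i with hg
  have h1 : HasSum (fun i => if i = j then f j else 0) (f j) := hasSum_ite_eq j (f j)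
  have h2 : HasSum g (S - f j) := by
    refine (hf.sub h1).congr_fun fun i => ?_
    by_cases h : i = j <;> simp [hg, h]
  have hgle : ∀ i, ‖g i‖ ≤ C i := by
    intro i
    by_cases h : i = j
    · subst h; simpa [hg] using hCn i
    · simpa [hg, h] using hC i h
  have hgs : Summable fun i => ‖g i‖ :=
    Summable.of_nonneg_of_le (fun i => norm_nonneg _) hgle hCs
  calc ‖S - f j‖ = ‖∑' i, g i‖ := by rw [h2.tsum_eq]
    _ ≤ ∑' i, ‖g i‖ := norm_tsum_le_tsum_norm hgs
    _ ≤ ∑' i, C i := Summable.tsum_le_tsum hgle hgs hCs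

end SumTail

open Stmt15 in
theorem stmt15 {H : Type*} [NormedAddCommGroup H] [InnerProductSpace ℂ H] [CompleteSpace H]
    (e : ℕ → H) (he : Orthonormal ℂ e)
    (htot : (Submodule.span ℂ (Set.range e)).topologicalClosure = ⊤)
    (E : (H →L[ℂ] H) → (H →L[ℂ] H))
    (hE : ∀ (a : H →L[ℂ] H) (ξ : H),
      HasSum (fun n : ℕ => rankOneProj e n (a (rankOneProj e n ξ))) (E a ξ))
    (b : ℕ → H →L[ℂ] H) (hb : ∀ n, IsCompactOperator ⇑(b n))
    (hsot : ∀ ξ : H, Filter.Tendsto (fun n => b n ξ) Filter.atTop (nhds 0))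
    (hsum : ∀ M : Set ℕ, ∃ s : H →L[ℂ] H,
      (∀ ξ : H, HasSum (fun n : M => b n ξ) (s ξ)) ∧
      ∃ d k : H →L[ℂ] H, (∀ n : ℕ, ∃ c : ℂ, d (e n) = c • e n) ∧
        IsCompactOperator ⇑k ∧ s = d + k) :
    Filter.Tendsto (fun n => ‖E (b n) - b n‖) Filter.atTop (nhds 0) := by
  classical
  by_contra hcon
  rw [Metric.tendsto_atTop] at hcon
  push_neg at hcon
  obtain ⟨δ, hδ, hfr⟩ := hcon
  have hfreq : ∃ᶠ n in Filter.atTop, δ ≤ ‖E (b n) - b n‖ := by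
    rw [Filter.frequently_atTop]
    intro N0
    obtain ⟨n, hn1, hn2⟩ := hfr N0
    exact ⟨n, hn1, by rwa [Real.dist_eq, sub_zero, abs_of_nonneg (norm_nonneg _)] at hn2⟩
  set ε : ℝ := δ / 100 with hεdef
  have hεpos : 0 < ε := by positivity
  -- the recursive construction via `key_step`
  have hkey : ∀ (j mprev Nprev : ℕ), ∃ (N mnext : ℕ) (ξ : H),
      Nprev < N ∧ δ ≤ ‖E (b N) - b N‖ ∧ ‖b N ∘L Q e mprev‖ ≤ ε * (2⁻¹:ℝ)^j ∧
      mprev < mnext ∧ ‖b N ∘L ((1 : H →L[ℂ] H) - Q e mnext)‖ ≤ ε * (2⁻¹:ℝ)^j ∧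
      ‖ξ‖ ≤ 1 ∧ Q e mprev ξ = 0 ∧ Q e mnext ξ = ξ ∧
      δ / 2 ≤ ‖(E (b N) - b N) ξ‖ := by
    intro j mprev Nprev
    have h1 : (0:ℝ) < ε * (2⁻¹:ℝ)^j := by positivity
    have h2 : ε * (2⁻¹:ℝ)^j ≤ δ / 16 := by
      have hle : (2⁻¹:ℝ)^j ≤ 1 := pow_le_one₀ (by norm_num) (by norm_num)
      calc ε * (2⁻¹:ℝ)^j ≤ ε * 1 := mul_le_mul_of_nonneg_left hle hεpos.le
        _ = δ / 100 := by rw [mul_one]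
        _ ≤ δ / 16 := by linarith
    exact key_step he htot E hE b hb hsot hδ hfreq h1 h2 mprev Nprev
  choose! F1 F2 F3 hA1 hA2 hA3 hA4 hA5 hA6 hA7 hA8 hA9 using hkey
  set seq : ℕ → ℕ × ℕ := fun j => Nat.rec (F1 0 0 0, F2 0 0 0)
    (fun j' p => (F1 (j'+1) p.2 p.1, F2 (j'+1) p.2 p.1)) j with hseqdef
  set Nf : ℕ → ℕ := fun j => (seq j).1 with hNfdef
  set mf : ℕ → ℕ := fun j => Nat.rec 0 (fun j' _ => (seq j').2) j with hmfdef
  set Np : ℕ → ℕ := fun j => Nat.rec 0 (fun j' _ => Nf j') j with hNpdef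
  have hseq : ∀ j, seq j = (F1 j (mf j) (Np j), F2 j (mf j) (Np j)) := by
    intro j
    cases j with
    | zero => rfl
    | succ j' => rfl
  set ξf : ℕ → H := fun j => F3 j (mf j) (Np j) with hξfdef
  have hNf : ∀ j, Nf j = F1 j (mf j) (Np j) := fun j => by
    show (seq j).1 = _
    rw [hseq j]
  have hmf : ∀ j, mf (j+1) = F2 j (mf j) (Np j) := fun j => by
    show (seq j).2 = _
    rw [hseq j]
  -- the invariants
  have G1 : ∀ j, Np j < Nf j := fun j => by rw [hNf]; exact hA1 j (mf j) (Np j)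
  have G2 : ∀ j, δ ≤ ‖E (b (Nf j)) - b (Nf j)‖ := fun j => by
    rw [hNf]; exact hA2 j (mf j) (Np j)
  have G3 : ∀ j, ‖b (Nf j) ∘L Q e (mf j)‖ ≤ ε * (2⁻¹:ℝ)^j := fun j => by
    rw [hNf]; exact hA3 j (mf j) (Np j)
  have G4 : ∀ j, mf j < mf (j+1) := fun j => by rw [hmf]; exact hA4 j (mf j) (Np j)
  have G5 : ∀ j, ‖b (Nf j) ∘L ((1 : H →L[ℂ] H) - Q e (mf (j+1)))‖ ≤ ε * (2⁻¹:ℝ)^j :=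
    fun j => by rw [hNf, hmf]; exact hA5 j (mf j) (Np j)
  have G6 : ∀ j, ‖ξf j‖ ≤ 1 := fun j => hA6 j (mf j) (Np j)
  have G7 : ∀ j, Q e (mf j) (ξf j) = 0 := fun j => hA7 j (mf j) (Np j)
  have G8 : ∀ j, Q e (mf (j+1)) (ξf j) = ξf j := fun j => by
    rw [hmf]; exact hA8 j (mf j) (Np j)
  have G9 : ∀ j, δ / 2 ≤ ‖(E (b (Nf j)) - b (Nf j)) (ξf j)‖ := fun j => by
    rw [hNf]; exact hA9 j (mf j) (Np j)
  have hNmono : StrictMono Nf :=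
    strictMono_nat_of_lt_succ fun j => by have := G1 (j+1); exact this
  have hmmono : StrictMono mf := strictMono_nat_of_lt_succ G4
  -- the sum over the range of Nf
  obtain ⟨s, hs, d, k, hd, hk, hsdk⟩ := hsum (Set.range Nf)
  set eqv : ℕ ≃ Set.range Nf := Equiv.ofInjective Nf hNmono.injective with heqv
  have hS : ∀ ξ : H, HasSum (fun l : ℕ => b (Nf l) ξ) (s ξ) := by
    intro ξ
    have h1 := (eqv.hasSum_iff (f := fun n : Set.range Nf => b (n : ℕ) ξ)).mpr (hs ξ)
    exact h1
  choose dc hdc using hd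
  set κ : ℕ → ℝ := fun j => ‖k ∘L ((1 : H →L[ℂ] H) - Q e (mf j))‖ with hκdef
  -- geometric bounds
  have hCsum : Summable (fun l : ℕ => ε * (2⁻¹:ℝ)^l) :=
    (summable_geometric_of_lt_one (by norm_num) (by norm_num)).mul_left ε
  have hCtsum : (∑' l : ℕ, ε * (2⁻¹:ℝ)^l) = 2 * ε := by
    rw [tsum_mul_left, tsum_geometric_of_lt_one (by norm_num) (by norm_num)]
    norm_num [mul_comm]
  have hCnn : ∀ l : ℕ, (0:ℝ) ≤ ε * (2⁻¹:ℝ)^l := fun l => by positivity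
  -- the main estimate
  have hmain : ∀ j, δ / 2 ≤ 4 * ε + 2 * κ j := by
    intro j
    -- T1 : the sum minus the j-th term is small
    have hbound : ∀ l, l ≠ j → ‖b (Nf l) (ξf j)‖ ≤ ε * (2⁻¹:ℝ)^l := by
      intro l hl
      rcases lt_or_gt_of_ne hl with hlj | hlj
      · -- l < j : use the tail bound G5
        have hql : Q e (mf (l+1)) (ξf j) = 0 := by
          have hle : mf (l+1) ≤ mf j := hmmono.monotone (show l+1 ≤ j by omega)
          rw [← Q_Q he hle (ξf j), G7 j, map_zero]
        have : b (Nf l) (ξf j)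
            = (b (Nf l) ∘L ((1 : H →L[ℂ] H) - Q e (mf (l+1)))) (ξf j) := by
          rw [ContinuousLinearMap.comp_apply, one_sub_Q_apply he, hql, sub_zero]
        rw [this]
        calc ‖(b (Nf l) ∘L ((1 : H →L[ℂ] H) - Q e (mf (l+1)))) (ξf j)‖
            ≤ ‖b (Nf l) ∘L ((1 : H →L[ℂ] H) - Q e (mf (l+1)))‖ * ‖ξf j‖ :=
              ContinuousLinearMap.le_opNorm _ _
          _ ≤ (ε * (2⁻¹:ℝ)^l) * 1 :=
              mul_le_mul (G5 l) (G6 j) (norm_nonneg _) (hCnn l)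
          _ = ε * (2⁻¹:ℝ)^l := mul_one _
      · -- l > j : use the head bound G3
        have hql : Q e (mf l) (ξf j) = ξf j := by
          have hle : mf (j+1) ≤ mf l := hmmono.monotone (show j+1 ≤ l by omega)
          rw [← G8 j, Q_Q' he hle, G8 j]
        have : b (Nf l) (ξf j) = (b (Nf l) ∘L Q e (mf l)) (ξf j) := by
          rw [ContinuousLinearMap.comp_apply, hql]
        rw [this]
        calc ‖(b (Nf l) ∘L Q e (mf l)) (ξf j)‖
            ≤ ‖b (Nf l) ∘L Q e (mf l)‖ * ‖ξf j‖ := ContinuousLinearMap.le_opNorm _ _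
          _ ≤ (ε * (2⁻¹:ℝ)^l) * 1 := mul_le_mul (G3 l) (G6 j) (norm_nonneg _) (hCnn l)
          _ = ε * (2⁻¹:ℝ)^l := mul_one _
    have T1 : ‖s (ξf j) - b (Nf j) (ξf j)‖ ≤ 2 * ε := by
      have := norm_hasSum_sub_single (hS (ξf j)) j hbound hCnn hCsum
      rwa [hCtsum] at this
    -- T2 : k applied to ξf j is small
    have T2 : ‖k (ξf j)‖ ≤ κ j := by
      have h1 : k (ξf j) = (k ∘L ((1 : H →L[ℂ] H) - Q e (mf j))) (ξf j) := by
        rw [ContinuousLinearMap.comp_apply, one_sub_Q_apply he, G7 j, sub_zero]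
      rw [h1]
      calc ‖(k ∘L ((1 : H →L[ℂ] H) - Q e (mf j))) (ξf j)‖
          ≤ κ j * ‖ξf j‖ := ContinuousLinearMap.le_opNorm _ _
        _ ≤ κ j * 1 := mul_le_mul_of_nonneg_left (G6 j) (norm_nonneg _)
        _ = κ j := mul_one _
    -- T3 : the diagonal part is small
    have hκnn : 0 ≤ κ j := norm_nonneg _
    have T3 : ‖(d - E (b (Nf j))) (ξf j)‖ ≤ 2 * ε + κ j := by
      have hdiag : ∀ i, (d - E (b (Nf j))) (e i)
          = (dc i - (@inner ℂ _ _ (e i) (b (Nf j) (e i)))) • e i := by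
        intro i
        rw [ContinuousLinearMap.sub_apply, hdc i, E_apply_basis he E hE, sub_smul]
      have hB : ∀ i < mf (j+1), (@inner ℂ _ _ (e i) (ξf j)) ≠ 0 →
          ‖dc i - (@inner ℂ _ _ (e i) (b (Nf j) (e i)))‖ ≤ 2 * ε + κ j := by
        intro i hi hne
        have hi2 : mf j ≤ i := by
          by_contra hlt
          push_neg at hlt
          apply hne
          have := inner_Q he (mf j) (ξf j) i
          rw [G7 j, inner_zero_right, if_pos hlt] at this
          exact this.symm
        -- the diagonal entry of s
        have hse : (@inner ℂ _ _ (e i) (s (e i))) = dc i + (@inner ℂ _ _ (e i) (k (e i))) := by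
          rw [hsdk, ContinuousLinearMap.add_apply, inner_add_right, hdc i, inner_smul_right,
            orthonormal_iff_ite.mp he, if_pos rfl, mul_one]
        have hsumi : HasSum (fun l => (@inner ℂ _ _ (e i) (b (Nf l) (e i)))) (@inner ℂ _ _ (e i) (s (e i))) :=
          (hS (e i)).mapL (innerSL ℂ (e i))
        have hbound2 : ∀ l, l ≠ j → ‖(@inner ℂ _ _ (e i) (b (Nf l) (e i)))‖ ≤ ε * (2⁻¹:ℝ)^l := by
          intro l hl
          have hinle : ‖(@inner ℂ _ _ (e i) (b (Nf l) (e i)))‖ ≤ ‖b (Nf l) (e i)‖ := by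
            calc ‖(@inner ℂ _ _ (e i) (b (Nf l) (e i)))‖ ≤ ‖e i‖ * ‖b (Nf l) (e i)‖ :=
                  norm_inner_le_norm _ _
              _ = ‖b (Nf l) (e i)‖ := by rw [he.1 i, one_mul]
          refine hinle.trans ?_
          rcases lt_or_gt_of_ne hl with hlj | hlj
          · have hle : mf (l+1) ≤ mf j := hmmono.monotone (show l+1 ≤ j by omega)
            have hq0 : Q e (mf (l+1)) (e i) = 0 := Q_e_zero he (le_trans hle hi2)
            have heq : b (Nf l) (e i)
                = (b (Nf l) ∘L ((1 : H →L[ℂ] H) - Q e (mf (l+1)))) (e i) := by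
              rw [ContinuousLinearMap.comp_apply, one_sub_Q_apply he, hq0, sub_zero]
            rw [heq]
            calc ‖(b (Nf l) ∘L ((1 : H →L[ℂ] H) - Q e (mf (l+1)))) (e i)‖
                ≤ ‖b (Nf l) ∘L ((1 : H →L[ℂ] H) - Q e (mf (l+1)))‖ * ‖e i‖ :=
                  ContinuousLinearMap.le_opNorm _ _
              _ = ‖b (Nf l) ∘L ((1 : H →L[ℂ] H) - Q e (mf (l+1)))‖ := by
                  rw [he.1 i, mul_one]
              _ ≤ ε * (2⁻¹:ℝ)^l := G5 l
          · have hle : mf (j+1) ≤ mf l := hmmono.monotone (show j+1 ≤ l by omega)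
            have hq1 : Q e (mf l) (e i) = e i := Q_e he (lt_of_lt_of_le hi hle)
            have heq : b (Nf l) (e i) = (b (Nf l) ∘L Q e (mf l)) (e i) := by
              rw [ContinuousLinearMap.comp_apply, hq1]
            rw [heq]
            calc ‖(b (Nf l) ∘L Q e (mf l)) (e i)‖
                ≤ ‖b (Nf l) ∘L Q e (mf l)‖ * ‖e i‖ := ContinuousLinearMap.le_opNorm _ _
              _ = ‖b (Nf l) ∘L Q e (mf l)‖ := by rw [he.1 i, mul_one]
              _ ≤ ε * (2⁻¹:ℝ)^l := G3 l
        have TT : ‖(@inner ℂ _ _ (e i) (s (e i))) - (@inner ℂ _ _ (e i) (b (Nf j) (e i)))‖ ≤ 2 * ε := by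
          have := norm_hasSum_sub_single hsumi j hbound2 hCnn hCsum
          rwa [hCtsum] at this
        have hki : ‖(@inner ℂ _ _ (e i) (k (e i)))‖ ≤ κ j := by
          have hq0 : Q e (mf j) (e i) = 0 := Q_e_zero he hi2
          have heq : k (e i) = (k ∘L ((1 : H →L[ℂ] H) - Q e (mf j))) (e i) := by
            rw [ContinuousLinearMap.comp_apply, one_sub_Q_apply he, hq0, sub_zero]
          calc ‖(@inner ℂ _ _ (e i) (k (e i)))‖ ≤ ‖e i‖ * ‖k (e i)‖ := norm_inner_le_norm _ _
            _ = ‖k (e i)‖ := by rw [he.1 i, one_mul]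
            _ ≤ κ j := by
                rw [heq]
                calc ‖(k ∘L ((1 : H →L[ℂ] H) - Q e (mf j))) (e i)‖
                    ≤ κ j * ‖e i‖ := ContinuousLinearMap.le_opNorm _ _
                  _ = κ j := by rw [he.1 i, mul_one]
        have hkey2 : dc i - (@inner ℂ _ _ (e i) (b (Nf j) (e i)))
            = ((@inner ℂ _ _ (e i) (s (e i))) - (@inner ℂ _ _ (e i) (b (Nf j) (e i)))) - (@inner ℂ _ _ (e i) (k (e i))) := by
          rw [hse]; ring
        rw [hkey2]
        calc ‖((@inner ℂ _ _ (e i) (s (e i))) - (@inner ℂ _ _ (e i) (b (Nf j) (e i)))) - (@inner ℂ _ _ (e i) (k (e i)))‖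
            ≤ ‖(@inner ℂ _ _ (e i) (s (e i))) - (@inner ℂ _ _ (e i) (b (Nf j) (e i)))‖ + ‖(@inner ℂ _ _ (e i) (k (e i)))‖ :=
              norm_sub_le _ _
          _ ≤ 2 * ε + κ j := add_le_add TT hki
      calc ‖(d - E (b (Nf j))) (ξf j)‖ ≤ (2 * ε + κ j) * ‖ξf j‖ :=
            diag_norm he (d - E (b (Nf j))) _ hdiag (G8 j) (by linarith) hB
        _ ≤ (2 * ε + κ j) * 1 := mul_le_mul_of_nonneg_left (G6 j) (by linarith)
        _ = 2 * ε + κ j := mul_one _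
    -- assemble
    have hdecomp : (E (b (Nf j)) - b (Nf j)) (ξf j)
        = -((d - E (b (Nf j))) (ξf j)) - k (ξf j) + (s (ξf j) - b (Nf j) (ξf j)) := by
      have hsk : s (ξf j) = d (ξf j) + k (ξf j) := by rw [hsdk]; rfl
      simp only [ContinuousLinearMap.sub_apply, hsk]
      abel
    have := G9 j
    rw [hdecomp] at this
    have hnorm : ‖-((d - E (b (Nf j))) (ξf j)) - k (ξf j) + (s (ξf j) - b (Nf j) (ξf j))‖
        ≤ ‖(d - E (b (Nf j))) (ξf j)‖ + ‖k (ξf j)‖ + ‖s (ξf j) - b (Nf j) (ξf j)‖ := by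
      calc ‖-((d - E (b (Nf j))) (ξf j)) - k (ξf j) + (s (ξf j) - b (Nf j) (ξf j))‖
          ≤ ‖-((d - E (b (Nf j))) (ξf j)) - k (ξf j)‖ + ‖s (ξf j) - b (Nf j) (ξf j)‖ :=
            norm_add_le _ _
        _ ≤ ‖-((d - E (b (Nf j))) (ξf j))‖ + ‖k (ξf j)‖ + ‖s (ξf j) - b (Nf j) (ξf j)‖ := by
            exact add_le_add_left (norm_sub_le _ _) _
        _ = _ := by rw [norm_neg]
    linarith [T1, T2, T3, this.trans hnorm]
  -- final contradiction : κ j → 0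
  obtain ⟨m₀, hm₀⟩ := compact_tail_small he htot k hk (ε := δ / 10) (by positivity)
  have hκsmall : κ m₀ ≤ δ / 10 := hm₀ (mf m₀) hmmono.le_apply
  have := hmain m₀
  rw [hεdef] at this
  linarith
end

section
/- Let X, Y be u.l.f. metric spaces, δ ∈ (0,1), and suppose there exist ε > 0, m ∈ ℕ, and for each x ∈ X a finite set Y_{x,ε} ⊆ Y, such that the map Φ on projections χ_A (A ⊆ X finite) is rank-preserving and satisfies ‖(1 − χ_{B_m(Y_{A,ε})}) Φ(χ_A)‖ < δ for all finite A ⊆ X, where Y_{A,ε} = ∪_{x∈A} Y_{x,ε}. Then |A| ≤ |∪_{x∈A} B_m(Y_{x,ε})| for every finite A ⊆ X. -/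
theorem stmt16 {X Y : Type*} [MetricSpace X] [MetricSpace Y]
    (hX : ∀ (x : X) (r : ℝ), ({x' : X | dist x x' ≤ r}).Finite)
    (hY : ∀ (y : Y) (r : ℝ), ({y' : Y | dist y y' ≤ r}).Finite)
    {EY : Type*} [NormedAddCommGroup EY] [InnerProductSpace ℂ EY] [CompleteSpace EY]
    (δY : Y → EY) (hδY : Orthonormal ℂ δY)
    (χ : Set Y → (EY →L[ℂ] EY))
    (hχ : ∀ (S : Set Y) (ξ : EY), HasSum (fun y : S => (inner ℂ (δY y) ξ : ℂ) • δY y) (χ S ξ))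
    (δ ε : ℝ) (hδ : δ ∈ Set.Ioo (0 : ℝ) 1) (hε : 0 < ε) (m : ℕ)
    (Yx : X → Finset Y)
    (Φ : Finset X → (EY →L[ℂ] EY))
    (hproj : ∀ A : Finset X, IsIdempotentElem (Φ A) ∧ IsSelfAdjoint (Φ A))
    (hrank : ∀ A : Finset X, Module.rank ℂ (LinearMap.range (Φ A : EY →ₗ[ℂ] EY)) = (A.card : Cardinal))
    (hest : ∀ A : Finset X,
      ‖(1 - χ {y : Y | ∃ x ∈ A, ∃ y' ∈ Yx x, dist y y' ≤ (m : ℝ)}) * Φ A‖ < δ) :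
    ∀ A : Finset X,
      A.card ≤ (⋃ x ∈ A, {y : Y | ∃ y' ∈ Yx x, dist y y' ≤ (m : ℝ)}).ncard := by
  intro A
  set S : Set Y := {y : Y | ∃ x ∈ A, ∃ y' ∈ Yx x, dist y y' ≤ (m : ℝ)} with hS_def
  have hSU : (⋃ x ∈ A, {y : Y | ∃ y' ∈ Yx x, dist y y' ≤ (m : ℝ)}) = S := by
    ext y; simp [hS_def]
  rw [hSU]
  have hSfin : S.Finite := by
    have hsub : S ⊆ ⋃ x ∈ A, ⋃ y' ∈ Yx x, {y : Y | dist y' y ≤ (m : ℝ)} := by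
      rintro y ⟨x, hx, y', hy', hd⟩
      simp only [Set.mem_iUnion]
      exact ⟨x, hx, y', hy', show dist y' y ≤ (m : ℝ) by rwa [dist_comm]⟩
    exact ((A.finite_toSet.biUnion fun x _ =>
      (Yx x).finite_toSet.biUnion fun y' _ => hY y' m)).subset hsub
  haveI : Fintype ↥S := hSfin.fintype
  by_contra hlt
  push_neg at hlt
  -- range of χ S is contained in the span of δY '' S
  have hrange : LinearMap.range (χ S).toLinearMap ≤ Submodule.span ℂ (δY '' S) := by
    rintro _ ⟨ξ, rfl⟩
    have h1 := hχ S ξ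
    have h2 : HasSum (fun y : S => (inner ℂ (δY y) ξ : ℂ) • δY y)
        (∑ y : S, (inner ℂ (δY y) ξ : ℂ) • δY y) := hasSum_fintype _
    have h3 : (χ S) ξ = ∑ y : S, (inner ℂ (δY y) ξ : ℂ) • δY y := h1.unique h2
    show (χ S) ξ ∈ Submodule.span ℂ (δY '' S)
    rw [h3]
    exact Submodule.sum_mem _ fun y _ => Submodule.smul_mem _ _
      (Submodule.subset_span ⟨y, y.2, rfl⟩)
  -- restriction of χ S to the range of Φ A
  set f : ↥(LinearMap.range (Φ A : EY →ₗ[ℂ] EY)) →ₗ[ℂ] EY :=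
    (χ S).toLinearMap.domRestrict (LinearMap.range (Φ A : EY →ₗ[ℂ] EY)) with hf_def
  have hrank_f : Module.rank ℂ (LinearMap.range f) ≤ (S.ncard : Cardinal) := by
    have h1 : LinearMap.range f ≤ Submodule.span ℂ (δY '' S) := by
      rintro _ ⟨ξ, rfl⟩
      exact hrange ⟨ξ.1, rfl⟩
    calc Module.rank ℂ (LinearMap.range f)
        ≤ Module.rank ℂ (Submodule.span ℂ (δY '' S)) := Submodule.rank_mono h1
      _ ≤ Cardinal.mk (δY '' S) := rank_span_le _
      _ = (((δY '' S).ncard : ℕ) : Cardinal) := by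
          haveI : Fintype ↥(δY '' S) := (hSfin.image δY).fintype
          rw [Cardinal.mk_fintype, Set.ncard_eq_toFinset_card' (δY '' S),
            Set.toFinset_card]
      _ ≤ (S.ncard : Cardinal) := Nat.cast_le.mpr (Set.ncard_image_le hSfin)
  have hker : LinearMap.ker f ≠ ⊥ := by
    intro hbot
    have := LinearMap.rank_range_add_rank_ker f
    rw [hbot, rank_bot, add_zero, hrank A] at this
    have : (A.card : Cardinal) ≤ (S.ncard : Cardinal) := this ▸ hrank_f
    exact absurd (Nat.cast_le.mp this) (not_le.mpr hlt)
  obtain ⟨ξ, hξker, hξne⟩ := Submodule.ne_bot_iff _ |>.mp hker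
  have hξ1ne : (ξ : EY) ≠ 0 := fun h => hξne (Subtype.ext h)
  have hχξ : χ S (ξ : EY) = 0 := hξker
  -- Φ A fixes elements of its range
  have hfix : Φ A (ξ : EY) = (ξ : EY) := by
    obtain ⟨v, hv⟩ := ξ.2
    have h := (hproj A).1
    rw [← hv, ContinuousLinearMap.coe_coe, ← ContinuousLinearMap.mul_apply, h]
  set η : EY := ((‖(ξ : EY)‖⁻¹ : ℝ) : ℂ) • (ξ : EY) with hη_def
  have hnorm : ‖η‖ = 1 := by
    rw [hη_def, norm_smul, Complex.norm_real, norm_inv, norm_norm,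
      inv_mul_cancel₀ (norm_ne_zero_iff.mpr hξ1ne)]
  have hΦη : Φ A η = η := by
    rw [hη_def, map_smul, hfix]
  have hχη : χ S η = 0 := by
    rw [hη_def, map_smul, hχξ, smul_zero]
  have happ : ((1 - χ S) * Φ A) η = η := by
    rw [ContinuousLinearMap.mul_apply, hΦη, ContinuousLinearMap.sub_apply,
      ContinuousLinearMap.one_apply, hχη, sub_zero]
  have h1 : (1 : ℝ) ≤ ‖(1 - χ S) * Φ A‖ := by
    have := ((1 - χ S) * Φ A).le_opNorm η
    rw [happ, hnorm, mul_one] at this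
    linarith
  have h2 := hest A
  rw [← hS_def] at h2
  linarith [hδ.2]
end

section
/- Let X, Y be sets equipped with metrics, and α : X → Fin(Y), β : Y → Fin(X) functions with nonempty values such that (i) any f : X → Y with f(x) ∈ α(x) for all x and any g : Y → X with g(y) ∈ β(y) for all y are mutually inverse coarse equivalences, and (ii) |A| ≤ |∪_{x∈A} α(x)| for every finite A ⊆ X and |B| ≤ |∪_{y∈B} β(y)| for every finite B ⊆ Y. Then X and Y are bijectively coarsely equivalent; moreover every f with f(x) ∈ α(x) is close to a bijective coarse equivalence. -/
/-- Cantor–Schröder–Bernstein with the pointwise property that the bijection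
agrees with `f` or with `g⁻¹` at every point. -/
lemma csb_pointwise {X Y : Type*} (f : X → Y) (g : Y → X)
    (hf : Function.Injective f) (hg : Function.Injective g) :
    ∃ h : X → Y, Function.Bijective h ∧ ∀ x, h x = f x ∨ g (h x) = x := by
  classical
  rcases isEmpty_or_nonempty Y with hY | hY
  · haveI : IsEmpty X := ⟨fun x => (hY.false (f x)).elim⟩
    exact ⟨f, ⟨fun a b _ => Subsingleton.elim a b, fun y => (hY.false y).elim⟩,
      fun x => Or.inl rfl⟩
  set S : Set X := ⋃ n, (g ∘ f)^[n] '' (Set.range g)ᶜ with hS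
  have hstep : ∀ x ∈ S, g (f x) ∈ S := by
    intro x hx
    obtain ⟨n, hn⟩ := Set.mem_iUnion.1 hx
    obtain ⟨z, hz, rfl⟩ := hn
    refine Set.mem_iUnion.2 ⟨n + 1, z, hz, ?_⟩
    rw [Function.iterate_succ_apply']
    rfl
  have hmem : ∀ x, x ∉ S → x ∈ Set.range g := by
    intro x hx
    by_contra hc
    exact hx (Set.mem_iUnion.2 ⟨0, by simpa using hc⟩)
  set h : X → Y := fun x => if x ∈ S then f x else Function.invFun g x with hh
  have hgh : ∀ x, x ∉ S → g (h x) = x := by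
    intro x hx
    simp only [hh, if_neg hx]
    exact Function.invFun_eq (hmem x hx)
  have hpt : ∀ x, h x = f x ∨ g (h x) = x := by
    intro x
    by_cases hx : x ∈ S
    · exact Or.inl (by simp [hh, hx])
    · exact Or.inr (hgh x hx)
  refine ⟨h, ⟨?_, ?_⟩, hpt⟩
  · intro a b hab
    by_cases ha : a ∈ S <;> by_cases hb : b ∈ S
    · exact hf (by simpa [hh, ha, hb] using hab)
    · exfalso
      have : g (h a) = g (h b) := by rw [hab]
      rw [hgh b hb] at this
      have hfa : h a = f a := by simp [hh, ha]
      rw [hfa] at this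
      exact hb (this ▸ hstep a ha)
    · exfalso
      have : g (h b) = g (h a) := by rw [hab]
      rw [hgh a ha] at this
      have hfb : h b = f b := by simp [hh, hb]
      rw [hfb] at this
      exact ha (this ▸ hstep b hb)
    · have := (hgh a ha).symm.trans (by rw [hab, hgh b hb])
      exact this
  · intro y
    by_cases hgy : g y ∈ S
    · obtain ⟨n, hn⟩ := Set.mem_iUnion.1 hgy
      obtain ⟨z, hz, hzn⟩ := hn
      cases n with
      | zero =>
        exfalso
        simp only [Function.iterate_zero, id] at hzn
        exact hz ⟨y, hzn.symm⟩
      | succ m =>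
        rw [Function.iterate_succ_apply'] at hzn
        have hx : (g ∘ f)^[m] z ∈ S := Set.mem_iUnion.2 ⟨m, z, hz, rfl⟩
        have : f ((g ∘ f)^[m] z) = y := hg hzn
        exact ⟨(g ∘ f)^[m] z, by simp [hh, hx, this]⟩
    · refine ⟨g y, ?_⟩
      simp only [hh, if_neg hgy]
      exact Function.leftInverse_invFun hg y

lemma coarse_of_close {X Y : Type*} [MetricSpace X] [MetricSpace Y] {f h : X → Y}
    {C : ℝ} (hC : ∀ x, dist (f x) (h x) ≤ C) (hf : Coarse f) : Coarse h := by
  intro r hr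
  obtain ⟨s, hs, hfs⟩ := hf r hr
  refine ⟨s + 2 * max C 0, by positivity, fun x x' hd => ?_⟩
  calc dist (h x) (h x') ≤ dist (h x) (f x) + dist (f x) (f x') + dist (f x') (h x') :=
        dist_triangle4 _ _ _ _
    _ ≤ max C 0 + s + max C 0 := by
        gcongr
        · exact (dist_comm (h x) (f x) ▸ hC x).trans (le_max_left _ _)
        · exact hfs x x' hd
        · exact (hC x').trans (le_max_left _ _)
    _ = s + 2 * max C 0 := by ring

theorem stmt17 {X Y : Type*} [MetricSpace X] [MetricSpace Y] [DecidableEq X] [DecidableEq Y]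
    (α : X → Finset Y) (β : Y → Finset X)
    (hαne : ∀ x, (α x).Nonempty) (hβne : ∀ y, (β y).Nonempty)
    (h1 : ∀ (f : X → Y) (g : Y → X), (∀ x, f x ∈ α x) → (∀ y, g y ∈ β y) →
      Coarse f ∧ Coarse g ∧ Close (g ∘ f) id ∧ Close (f ∘ g) id)
    (h2 : ∀ A : Finset X, A.card ≤ (A.biUnion α).card)
    (h3 : ∀ B : Finset Y, B.card ≤ (B.biUnion β).card) :
    (∃ h : X → Y, Function.Bijective h ∧ Coarse h ∧
      ∃ k : Y → X, Coarse k ∧ Close (k ∘ h) id ∧ Close (h ∘ k) id) ∧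
    (∀ f : X → Y, (∀ x, f x ∈ α x) →
      ∃ h : X → Y, Function.Bijective h ∧ Coarse h ∧
        (∃ k : Y → X, Coarse k ∧ Close (k ∘ h) id ∧ Close (h ∘ k) id) ∧ Close f h) := by
  classical
  obtain ⟨f0, hf0inj, hf0mem⟩ := (Finset.all_card_le_biUnion_card_iff_exists_injective α).mp h2
  obtain ⟨g0, hg0inj, hg0mem⟩ := (Finset.all_card_le_biUnion_card_iff_exists_injective β).mp h3
  obtain ⟨hf0c, hg0c, ⟨C1, hC1⟩, ⟨C2, hC2⟩⟩ := h1 f0 g0 hf0mem hg0mem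
  simp only [Function.comp_apply, id] at hC1 hC2
  obtain ⟨h, hbij, hpt⟩ := csb_pointwise f0 g0 hf0inj hg0inj
  -- h is close to f0
  have hclose : ∀ x, dist (f0 x) (h x) ≤ max C2 0 := by
    intro x
    rcases hpt x with he | he
    · rw [he]; simp
    · calc dist (f0 x) (h x) = dist (f0 (g0 (h x))) (h x) := by rw [he]
        _ ≤ C2 := hC2 (h x)
        _ ≤ max C2 0 := le_max_left _ _
  have hhc : Coarse h := coarse_of_close hclose hf0c
  -- k := g0 works
  have hmain : Coarse h ∧ ∃ k : Y → X, Coarse k ∧ Close (k ∘ h) id ∧ Close (h ∘ k) id := by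
    refine ⟨hhc, g0, hg0c, ?_, ?_⟩
    · obtain ⟨s, hs, hgs⟩ := hg0c (max C2 0 + 1) (by positivity)
      refine ⟨s + C1, fun x => ?_⟩
      calc dist (g0 (h x)) x ≤ dist (g0 (h x)) (g0 (f0 x)) + dist (g0 (f0 x)) x :=
            dist_triangle _ _ _
        _ ≤ s + C1 := by
            gcongr
            · refine hgs _ _ ?_
              rw [dist_comm]
              exact (hclose x).trans (by linarith [le_max_right C2 (0:ℝ)])
            · exact hC1 x
    · refine ⟨max C2 0 + C2, fun y => ?_⟩
      calc dist (h (g0 y)) y ≤ dist (h (g0 y)) (f0 (g0 y)) + dist (f0 (g0 y)) y :=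
            dist_triangle _ _ _
        _ ≤ max C2 0 + C2 := by
            gcongr
            · rw [dist_comm]; exact hclose (g0 y)
            · exact hC2 y
  refine ⟨⟨h, hbij, hmain⟩, fun f hfmem => ?_⟩
  obtain ⟨hfc, -, ⟨D1, hD1⟩, -⟩ := h1 f g0 hfmem hg0mem
  simp only [Function.comp_apply, id] at hD1
  obtain ⟨s, hs, hfs⟩ := hf0c (max D1 0 + 1) (by positivity)
  refine ⟨h, hbij, hmain.1, hmain.2, ⟨C2 + s + max C2 0, fun x => ?_⟩⟩
  calc dist (f x) (h x)
      ≤ dist (f x) (f0 (g0 (f x))) + dist (f0 (g0 (f x))) (f0 x) + dist (f0 x) (h x) :=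
        dist_triangle4 _ _ _ _
    _ ≤ C2 + s + max C2 0 := by
        gcongr
        · rw [dist_comm]; exact hC2 (f x)
        · refine hfs _ _ ?_
          exact (hD1 x).trans (by linarith [le_max_left D1 (0:ℝ), le_max_right D1 (0:ℝ)])
        · exact hclose x
end
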